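/- Let Γ* ⊂ ℝ^d be a full-rank lattice, and let τ : Γ* → GL(H) and τ' : Γ* → GL(H') be group homomorphisms into the bounded invertible operators of orders q ≥ 0 and q' ≥ 0 respectively, i.e. ‖τ(γ*)‖_{B(H)} ≤ C⟨γ*⟩^q and ‖τ'(γ*)‖_{B(H')} ≤ C'⟨γ*⟩^{q'} for all γ* ∈ Γ*. Suppose f ∈ S^m_{0,0}(B(H,H')) for some m ∈ ℝ (i.e. f is smooth and every derivative ∂_r^a ∂_k^α f is bounded in operator norm by a constant times ⟨k⟩^m) and f satisfies the equivariance condition f(r, k−γ*) = τ'(γ*) f(r,k) τ(γ*)^{−1} for all (r,k) ∈ ℝ^d×ℝ^d and all γ* ∈ Γ*. Then f ∈ S^{q+q'}_{0,0}(B(H,H')): for every pair of multi-indices a, α ∈ ℕ^d there exists C_{aα} > 0 with ‖∂_r^a ∂_k^α f(r,k)‖_{B(H,H')} ≤ C_{aα} ⟨k⟩^{q+q'} for all (r,k). -/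

import Mathlib

open MeasureTheory Complex SchwartzMap
open scoped Real ENNReal NNReal

noncomputable section

local notation "⟪" x ", " y "⟫_ℝ" => @inner ℝ _ _ x y
local notation "⟪" x ", " y "⟫_ℂ" => @inner ℂ _ _ x y

/-- Euclidean configuration space. -/
abbrev Ed (d : ℕ) : Type := EuclideanSpace ℝ (Fin d)

/-- Line integral of the vector potential `A` along the segment `[x, y]`. -/
def lineInt {d : ℕ} (A : Ed d → Ed d) (x y : Ed d) : ℝ :=
  ∫ s in (0:ℝ)..(1:ℝ), ⟪A (x + s • (y - x)), y - x⟫_ℝ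

/-- The phase `e^{-i(y-x)·η} e^{-i(λ/ε)Γ_A(εx,εy)}` of the magnetic Weyl quantization. -/
def wPhase {d : ℕ} (ε lam : ℝ) (A : Ed d → Ed d) (x y η : Ed d) : ℂ :=
  Complex.exp (-Complex.I * ((⟪y - x, η⟫_ℝ : ℝ) : ℂ)) *
    Complex.exp (-Complex.I * (((lam / ε) * lineInt A (ε • x) (ε • y) : ℝ) : ℂ))

/-- Magnetic Weyl quantization of an operator-valued symbol (absolutely convergent version,
with the momentum integral innermost, suitable for Schwartz-class symbols). -/
def opA {d : ℕ} {H H' : Type*} [NormedAddCommGroup H] [NormedSpace ℂ H]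
    [NormedAddCommGroup H'] [NormedSpace ℂ H']
    (ε lam : ℝ) (A : Ed d → Ed d) (f : Ed d × Ed d → (H →L[ℂ] H')) (Ψ : Ed d → H) :
    Ed d → H' :=
  fun x => (((2 * Real.pi) ^ d)⁻¹ : ℝ) •
    ∫ y : Ed d, ∫ η : Ed d, wPhase ε lam A x y η • f ((ε / 2) • (x + y), η) (Ψ y)

/-- Magnetic Weyl quantization as an (iterated, oscillatory) integral with the momentum
integral outermost; this realizes the oscillatory integral for Hörmander-class symbols. -/
def opW {d : ℕ} {H H' : Type*} [NormedAddCommGroup H] [NormedSpace ℂ H]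
    [NormedAddCommGroup H'] [NormedSpace ℂ H']
    (ε lam : ℝ) (A : Ed d → Ed d) (f : Ed d × Ed d → (H →L[ℂ] H')) (Ψ : Ed d → H) :
    Ed d → H' :=
  fun x => (((2 * Real.pi) ^ d)⁻¹ : ℝ) •
    ∫ η : Ed d, ∫ y : Ed d, wPhase ε lam A x y η • f ((ε / 2) • (x + y), η) (Ψ y)

/-- Directional derivative of a phase-space function. -/
def dirD {d : ℕ} {F : Type*} [NormedAddCommGroup F] [NormedSpace ℝ F]
    (v : Ed d × Ed d) (g : Ed d × Ed d → F) : Ed d × Ed d → F :=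
  fun p => fderiv ℝ g p v

/-- Directions corresponding to the multi-indices `a` (position) and `α` (momentum). -/
def mkDirs {d : ℕ} (a α : List (Fin d)) : List (Ed d × Ed d) :=
  (a.map fun j => ((EuclideanSpace.single j (1:ℝ) : Ed d), (0 : Ed d))) ++
    α.map fun j => ((0 : Ed d), (EuclideanSpace.single j (1:ℝ) : Ed d))

/-- The iterated partial derivative `∂_x^a ∂_ξ^α f`. -/
def mDeriv {d : ℕ} {F : Type*} [NormedAddCommGroup F] [NormedSpace ℝ F]
    (a α : List (Fin d)) (f : Ed d × Ed d → F) : Ed d × Ed d → F :=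
  (mkDirs a α).foldr dirD f

/-- The Japanese bracket `⟨ξ⟩ = (1+|ξ|²)^{1/2}`. -/
def jb {d : ℕ} (ξ : Ed d) : ℝ := Real.sqrt (1 + ‖ξ‖ ^ 2)

/-- Operator-valued Hörmander class `S^m_{ρ,δ}(B(H,H'))`. -/
structure IsHormander {d : ℕ} {H H' : Type*} [NormedAddCommGroup H] [NormedSpace ℂ H]
    [NormedAddCommGroup H'] [NormedSpace ℂ H'] (m ρ δ : ℝ)
    (f : Ed d × Ed d → (H →L[ℂ] H')) : Prop where
  smooth : ContDiff ℝ (⊤ : ℕ∞) f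
  bound : ∀ a α : List (Fin d), ∃ C : ℝ, ∀ p : Ed d × Ed d,
    ‖mDeriv a α f p‖ ≤ C * jb p.2 ^ (m - ρ * (α.length : ℝ) + δ * (a.length : ℝ))

/-- `A` is smooth with polynomially bounded derivatives of all orders. -/
def IsPolyVF {d : ℕ} (A : Ed d → Ed d) : Prop :=
  ContDiff ℝ (⊤ : ℕ∞) A ∧ ∀ n : ℕ, ∃ C : ℝ, ∃ k : ℕ, ∀ x, ‖iteratedFDeriv ℝ n A x‖ ≤ C * (1 + ‖x‖) ^ k

/-- Components `B_{jl} = ∂_j A_l − ∂_l A_j` of the magnetic field `B = dA`. -/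
def Bcomp {d : ℕ} (A : Ed d → Ed d) (x : Ed d) (j l : Fin d) : ℝ :=
  fderiv ℝ (fun z => A z l) x (EuclideanSpace.single j (1:ℝ)) -
    fderiv ℝ (fun z => A z j) x (EuclideanSpace.single l (1:ℝ))

/-- The magnetic field `B = dA` is bounded with bounded derivatives of all orders. -/
def IsBoundedField {d : ℕ} (A : Ed d → Ed d) : Prop :=
  ∀ (j l : Fin d) (n : ℕ), ∃ C : ℝ, ∀ x, ‖iteratedFDeriv ℝ n (fun z => Bcomp A z j l) x‖ ≤ C


/-- The lattice spanned (over ℤ) by a basis of ℝ^d. -/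
def latticeSet {d : ℕ} (b : Module.Basis (Fin d) ℝ (Ed d)) : Set (Ed d) :=
  {γ | ∃ c : Fin d → ℤ, γ = ∑ j, (c j : ℝ) • b j}


lemma jb_pos {d : ℕ} (ξ : Ed d) : 0 < jb ξ := Real.sqrt_pos.mpr (by positivity)

lemma one_le_jb {d : ℕ} (ξ : Ed d) : 1 ≤ jb ξ :=
  Real.one_le_sqrt.mpr (le_add_of_nonneg_right (sq_nonneg _))

lemma jb_neg {d : ℕ} (ξ : Ed d) : jb (-ξ) = jb ξ := by simp [jb]

lemma jb_add_le {d : ℕ} (x y : Ed d) : jb (x + y) ≤ Real.sqrt 2 * (jb x * jb y) := by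
  have h1 : ‖x + y‖ ≤ ‖x‖ + ‖y‖ := norm_add_le _ _
  have h : 1 + ‖x + y‖ ^ 2 ≤ 2 * ((1 + ‖x‖ ^ 2) * (1 + ‖y‖ ^ 2)) := by
    nlinarith [norm_nonneg x, norm_nonneg y, norm_nonneg (x + y), sq_nonneg (‖x‖ - ‖y‖),
      sq_nonneg (‖x‖ * ‖y‖)]
  calc jb (x + y) = Real.sqrt (1 + ‖x + y‖ ^ 2) := rfl
    _ ≤ Real.sqrt (2 * ((1 + ‖x‖ ^ 2) * (1 + ‖y‖ ^ 2))) := Real.sqrt_le_sqrt h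
    _ = Real.sqrt 2 * (jb x * jb y) := by
        rw [Real.sqrt_mul (by norm_num), Real.sqrt_mul (by positivity)]; rfl

lemma foldr_dirD_equivariant {d : ℕ} {F : Type*} [NormedAddCommGroup F] [NormedSpace ℝ F]
    (Φ : F →L[ℝ] F) (γ : Ed d) (L : List (Ed d × Ed d)) (h : Ed d × Ed d → F)
    (hsm : ContDiff ℝ (⊤ : ℕ∞) h) (heq : ∀ p : Ed d × Ed d, h (p.1, p.2 - γ) = Φ (h p)) :
    ContDiff ℝ (⊤ : ℕ∞) (L.foldr dirD h) ∧
      ∀ p : Ed d × Ed d, (L.foldr dirD h) (p.1, p.2 - γ) = Φ ((L.foldr dirD h) p) := by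
  induction L with
  | nil => exact ⟨hsm, heq⟩
  | cons v L ih =>
    obtain ⟨ih1, ih2⟩ := ih
    set g := L.foldr dirD h with hg
    have hsm' : ContDiff ℝ (⊤ : ℕ∞) (fun p : Ed d × Ed d => fderiv ℝ g p) :=
      ih1.fderiv_right (by simp)
    have key : ∀ p : Ed d × Ed d, fderiv ℝ g (p - ((0 : Ed d), γ)) = Φ.comp (fderiv ℝ g p) := by
      intro p
      have hdg : ∀ q : Ed d × Ed d, HasFDerivAt g (fderiv ℝ g q) q := fun q =>
        (ih1.differentiable (by simp) q).hasFDerivAt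
      have e : (fun q : Ed d × Ed d => g (q - ((0 : Ed d), γ))) = fun q => Φ (g q) := by
        funext q
        have hq : q - ((0 : Ed d), γ) = (q.1, q.2 - γ) := by
          ext <;> simp [Prod.sub_def]
        rw [hq, ih2 q]
      have h1 : HasFDerivAt (fun q : Ed d × Ed d => g (q - ((0 : Ed d), γ)))
          ((fderiv ℝ g (p - ((0 : Ed d), γ))).comp (ContinuousLinearMap.id ℝ _)) p :=
        (hdg _).comp p (hasFDerivAt_sub_const _)
      have h2 : HasFDerivAt (fun q : Ed d × Ed d => Φ (g q))
          (Φ.comp (fderiv ℝ g p)) p :=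
        Φ.hasFDerivAt.comp p (hdg p)
      rw [e] at h1
      simpa using h1.unique h2
    constructor
    · show ContDiff ℝ (⊤ : ℕ∞) (dirD v g)
      exact hsm'.clm_apply contDiff_const
    · intro p
      show fderiv ℝ g (p.1, p.2 - γ) v = Φ (fderiv ℝ g p v)
      have hp : ((p.1 : Ed d), p.2 - γ) = p - ((0 : Ed d), γ) := by
        ext <;> simp [Prod.sub_def]
      rw [hp, key p]; rfl

theorem statement_18 {d : ℕ} {H H' : Type*}
    [NormedAddCommGroup H] [InnerProductSpace ℂ H] [CompleteSpace H]
    [TopologicalSpace.SeparableSpace H]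
    [NormedAddCommGroup H'] [InnerProductSpace ℂ H'] [CompleteSpace H']
    [TopologicalSpace.SeparableSpace H']
    (b : Module.Basis (Fin d) ℝ (Ed d))
    (τ : Ed d → (H ≃L[ℂ] H)) (τ' : Ed d → (H' ≃L[ℂ] H'))
    (hτhom : ∀ γ₁ ∈ latticeSet b, ∀ γ₂ ∈ latticeSet b, τ (γ₁ + γ₂) = (τ γ₂).trans (τ γ₁))
    (hτ'hom : ∀ γ₁ ∈ latticeSet b, ∀ γ₂ ∈ latticeSet b, τ' (γ₁ + γ₂) = (τ' γ₂).trans (τ' γ₁))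
    (q q' : ℝ) (hq : 0 ≤ q) (hq' : 0 ≤ q')
    (C C' : ℝ)
    (hτbd : ∀ γ ∈ latticeSet b, ‖(τ γ : H →L[ℂ] H)‖ ≤ C * jb γ ^ q)
    (hτ'bd : ∀ γ ∈ latticeSet b, ‖(τ' γ : H' →L[ℂ] H')‖ ≤ C' * jb γ ^ q')
    (m : ℝ) (f : Ed d × Ed d → (H →L[ℂ] H'))
    (hf : IsHormander m 0 0 f)
    (heq : ∀ γ ∈ latticeSet b, ∀ r k : Ed d,
      f (r, k - γ) =
        ((τ' γ : H' →L[ℂ] H').comp ((f (r, k)).comp ((τ γ).symm : H →L[ℂ] H)))) :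
    IsHormander (q + q') 0 0 f := by
  classical
  obtain ⟨hsm, hbd⟩ := hf
  have hzero : (0 : Ed d) ∈ latticeSet b := ⟨0, by simp⟩
  have hneg : ∀ γ ∈ latticeSet b, -γ ∈ latticeSet b := by
    rintro γ ⟨c, rfl⟩
    refine ⟨-c, ?_⟩
    rw [← Finset.sum_neg_distrib]
    congr 1; funext j; simp [neg_smul]
  have hτ0 : ∀ x : H, τ 0 x = x := by
    intro x
    have h00 := hτhom 0 hzero 0 hzero
    rw [add_zero] at h00
    have hx := congrArg (fun e : H ≃L[ℂ] H => e x) h00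
    simp only [ContinuousLinearEquiv.trans_apply] at hx
    exact (τ 0).injective hx.symm
  have hτsymm : ∀ γ ∈ latticeSet b, ∀ x : H, (τ γ).symm x = τ (-γ) x := by
    intro γ hγ x
    apply (τ γ).injective
    rw [(τ γ).apply_symm_apply]
    have h1 := hτhom γ hγ (-γ) (hneg γ hγ)
    rw [add_neg_cancel] at h1
    have hx := congrArg (fun e : H ≃L[ℂ] H => e x) h1
    simp only [ContinuousLinearEquiv.trans_apply] at hx
    rw [← hx, hτ0]
  have hjb0 : jb (0 : Ed d) = 1 := by simp [jb]
  have hCpos : 0 ≤ C := by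
    have h := hτbd 0 hzero
    rw [hjb0, Real.one_rpow, mul_one] at h
    exact le_trans (norm_nonneg _) h
  have hC'pos : 0 ≤ C' := by
    have h := hτ'bd 0 hzero
    rw [hjb0, Real.one_rpow, mul_one] at h
    exact le_trans (norm_nonneg _) h
  set R : ℝ := ∑ j, ‖b j‖ with hRdef
  have hRpos : 0 ≤ R := Finset.sum_nonneg fun j _ => norm_nonneg _
  set S : ℝ := Real.sqrt (1 + R ^ 2) with hSdef
  have hSone : 1 ≤ S := Real.one_le_sqrt.mpr (le_add_of_nonneg_right (sq_nonneg _))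
  have hS0 : 0 ≤ S := le_trans zero_le_one hSone
  have hjbS : ∀ x : Ed d, ‖x‖ ≤ R → jb x ≤ S := by
    intro x hx
    exact Real.sqrt_le_sqrt (by nlinarith [norm_nonneg x])
  have hfund : ∀ k : Ed d, ∃ γ ∈ latticeSet b, ‖k - γ‖ ≤ R := by
    intro k
    refine ⟨∑ j, ((⌊b.repr k j⌋ : ℝ)) • b j, ⟨fun j => ⌊b.repr k j⌋, rfl⟩, ?_⟩
    have hdiff : k - (∑ j, ((⌊b.repr k j⌋ : ℝ)) • b j)
        = ∑ j, (b.repr k j - (⌊b.repr k j⌋ : ℝ)) • b j := by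
      have hrhs : (∑ j, (b.repr k j - (⌊b.repr k j⌋ : ℝ)) • b j)
          = k - ∑ j, ((⌊b.repr k j⌋ : ℝ)) • b j := by
        simp only [sub_smul]
        rw [Finset.sum_sub_distrib, b.sum_repr]
      rw [hrhs]
    rw [hdiff]
    refine (norm_sum_le _ _).trans (Finset.sum_le_sum fun j _ => ?_)
    rw [norm_smul, Real.norm_eq_abs]
    have habs : |b.repr k j - (⌊b.repr k j⌋ : ℝ)| ≤ 1 := by
      rw [abs_le]
      constructor
      · linarith [Int.floor_le (b.repr k j)]
      · linarith [Int.lt_floor_add_one (b.repr k j)]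
    calc |b.repr k j - (⌊b.repr k j⌋ : ℝ)| * ‖b j‖ ≤ 1 * ‖b j‖ :=
          mul_le_mul_of_nonneg_right habs (norm_nonneg _)
      _ = ‖b j‖ := one_mul _
  have main : ∀ γ ∈ latticeSet b, ∀ (aL αL : List (Fin d)) (r k : Ed d),
      mDeriv aL αL f (r, k - γ)
        = ((τ' γ : H' →L[ℂ] H')).comp
            ((mDeriv aL αL f (r, k)).comp ((τ γ).symm : H →L[ℂ] H)) := by
    intro γ hγ aL αL r k
    set Φ : (H →L[ℂ] H') →L[ℝ] (H →L[ℂ] H') :=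
      ((((ContinuousLinearMap.compL ℂ H H' H') (τ' γ : H' →L[ℂ] H')).comp
        (((ContinuousLinearMap.compL ℂ H H H').flip) ((τ γ).symm : H →L[ℂ] H))).restrictScalars
          ℝ) with hΦ
    have hΦapp : ∀ u : H →L[ℂ] H',
        Φ u = ((τ' γ : H' →L[ℂ] H')).comp (u.comp ((τ γ).symm : H →L[ℂ] H)) := by
      intro u; simp [hΦ]
    have hmain := (foldr_dirD_equivariant Φ γ (mkDirs aL αL) f hsm
      (fun p => by rw [heq γ hγ p.1 p.2, hΦapp])).2 (r, k)
    exact hmain.trans (hΦapp _)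
  refine ⟨hsm, ?_⟩
  intro a α
  obtain ⟨Ca, hCa⟩ := hbd a α
  have hCa' : ∀ p : Ed d × Ed d, ‖mDeriv a α f p‖ ≤ Ca * jb p.2 ^ m := by
    intro p
    have h := hCa p
    simpa using h
  have hCa0 : 0 ≤ Ca := by
    have h := hCa' ((0 : Ed d), (0 : Ed d))
    simp only [hjb0, Real.one_rpow, mul_one] at h
    exact le_trans (norm_nonneg _) h
  set Km : ℝ := max (S ^ m) 1 with hKmdef
  have hKm0 : 0 ≤ Km := le_trans zero_le_one (le_max_right _ _)
  have hKm : ∀ x : Ed d, ‖x‖ ≤ R → jb x ^ m ≤ Km := by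
    intro x hx
    rcases le_or_gt 0 m with hm | hm
    · exact le_trans (Real.rpow_le_rpow (jb_pos x).le (hjbS x hx) hm) (le_max_left _ _)
    · exact le_trans (Real.rpow_le_one_of_one_le_of_nonpos (one_le_jb x) hm.le)
        (le_max_right _ _)
  refine ⟨C' * Ca * C * Km * (Real.sqrt 2 * S) ^ (q + q'), ?_⟩
  rintro ⟨r, k⟩
  obtain ⟨γ, hγ, hnorm⟩ := hfund k
  have hmγ := main (-γ) (hneg γ hγ) a α r (k - γ)
  rw [sub_neg_eq_add, sub_add_cancel] at hmγ
  have hn1 : ‖(τ' (-γ) : H' →L[ℂ] H')‖ ≤ C' * jb γ ^ q' := by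
    have h := hτ'bd (-γ) (hneg γ hγ)
    rwa [jb_neg] at h
  have hn2 : ‖((τ (-γ)).symm : H →L[ℂ] H)‖ ≤ C * jb γ ^ q := by
    have hE : ((τ (-γ)).symm : H →L[ℂ] H) = (τ γ : H →L[ℂ] H) := by
      ext x
      simpa [neg_neg] using hτsymm (-γ) (hneg γ hγ) x
    rw [hE]; exact hτbd γ hγ
  have hgk : ‖mDeriv a α f (r, k)‖
      ≤ (C' * jb γ ^ q') * ((Ca * jb (k - γ) ^ m) * (C * jb γ ^ q)) := by
    rw [hmγ]
    have hinner : ‖(mDeriv a α f (r, k - γ)).comp ((τ (-γ)).symm : H →L[ℂ] H)‖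
        ≤ (Ca * jb (k - γ) ^ m) * (C * jb γ ^ q) := by
      refine (ContinuousLinearMap.opNorm_comp_le _ _).trans ?_
      exact mul_le_mul (hCa' (r, k - γ)) hn2 (norm_nonneg _)
        (le_trans (norm_nonneg _) (hCa' (r, k - γ)))
    refine (ContinuousLinearMap.opNorm_comp_le _ _).trans ?_
    exact mul_le_mul hn1 hinner (norm_nonneg _) (le_trans (norm_nonneg _) hn1)
  have hjbγ : jb γ ≤ (Real.sqrt 2 * S) * jb k := by
    have h2 : jb (γ - k) ≤ S := by
      refine hjbS _ ?_
      rwa [norm_sub_rev] at hnorm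
    calc jb γ = jb (k + (γ - k)) := by rw [add_sub_cancel]
      _ ≤ Real.sqrt 2 * (jb k * jb (γ - k)) := jb_add_le _ _
      _ ≤ Real.sqrt 2 * (jb k * S) := by
          have h2' : jb k * jb (γ - k) ≤ jb k * S :=
            mul_le_mul_of_nonneg_left h2 (jb_pos k).le
          exact mul_le_mul_of_nonneg_left h2' (Real.sqrt_nonneg 2)
      _ = (Real.sqrt 2 * S) * jb k := by ring
  have hpow : jb γ ^ q' * jb γ ^ q ≤ (Real.sqrt 2 * S) ^ (q + q') * jb k ^ (q + q') := by
    rw [← Real.rpow_add (jb_pos γ), add_comm q' q]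
    have h2 : jb γ ^ (q + q') ≤ ((Real.sqrt 2 * S) * jb k) ^ (q + q') :=
      Real.rpow_le_rpow (jb_pos γ).le hjbγ (by linarith)
    rw [Real.mul_rpow (mul_nonneg (Real.sqrt_nonneg 2) hS0) (jb_pos k).le] at h2
    exact h2
  have hfinal : ‖mDeriv a α f (r, k)‖
      ≤ C' * Ca * C * Km * ((Real.sqrt 2 * S) ^ (q + q') * jb k ^ (q + q')) := by
    calc ‖mDeriv a α f (r, k)‖
        ≤ (C' * jb γ ^ q') * ((Ca * jb (k - γ) ^ m) * (C * jb γ ^ q)) := hgk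
      _ = (C' * Ca * C) * (jb (k - γ) ^ m) * (jb γ ^ q' * jb γ ^ q) := by ring
      _ ≤ (C' * Ca * C) * Km * (jb γ ^ q' * jb γ ^ q) := by
          refine mul_le_mul_of_nonneg_right ?_
            (mul_nonneg (Real.rpow_nonneg (jb_pos γ).le _) (Real.rpow_nonneg (jb_pos γ).le _))
          exact mul_le_mul_of_nonneg_left (hKm _ hnorm)
            (mul_nonneg (mul_nonneg hC'pos hCa0) hCpos)
      _ ≤ (C' * Ca * C) * Km * ((Real.sqrt 2 * S) ^ (q + q') * jb k ^ (q + q')) := by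
          exact mul_le_mul_of_nonneg_left hpow
            (mul_nonneg (mul_nonneg (mul_nonneg hC'pos hCa0) hCpos) hKm0)
      _ = C' * Ca * C * Km * ((Real.sqrt 2 * S) ^ (q + q') * jb k ^ (q + q')) := by ring
  calc ‖mDeriv a α f (r, k)‖
      ≤ C' * Ca * C * Km * ((Real.sqrt 2 * S) ^ (q + q') * jb k ^ (q + q')) := hfinal
    _ = (C' * Ca * C * Km * (Real.sqrt 2 * S) ^ (q + q')) * jb k ^ (q + q') := by ring
    _ = (C' * Ca * C * Km * (Real.sqrt 2 * S) ^ (q + q'))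
          * jb ((r, k) : Ed d × Ed d).2 ^ (q + q' - 0 * (α.length : ℝ) + 0 * (a.length : ℝ)) := by
        norm_num

end
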